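/- Fix x ∈ ℝ^k, σ > 0, L ≥ 0 and μ > 0. Let p be a likelihood family such that ℓ(θ) = log p(x|θ) is differentiable, μ-strongly concave (θ ↦ ℓ(θ) + (μ/2)‖θ‖² is concave), and has L-Lipschitz gradient g = ∇ℓ. Let q_σ(θ|θ_t) = (2πσ²)^{−d/2} exp(−‖θ−θ_t‖²/(2σ²)), Z_σ(θ_t) = ∫ p(x|θ) q_σ(θ|θ_t) dθ ∈ (0,∞), and π_{θ_t}(θ) = p(x|θ) q_σ(θ|θ_t)/Z_σ(θ_t). Suppose θ̂ ∈ ℝ^d satisfies g(θ̂) = 0 (the maximum likelihood estimator) and θ̂_σ ∈ ℝ^d satisfies ∫ g(θ) π_{θ̂_σ}(θ) dθ = 0 (the smoothed maximum likelihood estimator, a zero of the Bayes-optimal FSM score), with g being π_{θ̂_σ}-integrable and M = sup_θ p(x|θ)/Z_σ(θ̂_σ) < ∞. Then ‖θ̂_σ − θ̂‖ ≤ (L √d σ / μ) · M. -/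

import Mathlib

open MeasureTheory

/-- The isotropic Gaussian proposal density `q_σ(θ | θt) = (2πσ²)^{-d/2} exp(-‖θ-θt‖²/(2σ²))`
on `ℝ^d`. -/
noncomputable def gaussianProposal (d : ℕ) (σ : ℝ)
    (θ θt : EuclideanSpace ℝ (Fin d)) : ℝ :=
  (2 * Real.pi * σ ^ 2) ^ (-(d : ℝ) / 2) * Real.exp (-‖θ - θt‖ ^ 2 / (2 * σ ^ 2))

/-!
Strong concavity makes `-g` strongly monotone, so `μ ‖θ̂_σ - θ̂‖ ≤ ‖g θ̂_σ - g θ̂‖ = ‖g θ̂_σ‖`.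
As the posterior `π` is a probability density with `∫ π g = 0`, we have
`g θ̂_σ = ∫ π(θ) (g θ̂_σ - g θ) dθ`; with `π ≤ M q_σ` and the Lipschitz bound this is at most
`L M ∫ ‖θ - θ̂_σ‖ q_σ(θ | θ̂_σ) dθ`. The first absolute moment of the Gaussian is at most
`σ √d` by AM-GM against its second moment `d σ²`, which is computed coordinatewise from the
one-dimensional variance.
-/

open Finset Function ProbabilityTheory WithLp
open scoped NNReal

section ProductIntegral

variable {ι α : Type*} [Fintype ι] [DecidableEq ι]

lemma mul_prod_eq_prod_update (f : ι → α → ℝ) (a : α → ℝ) (i : ι) (y : ι → α) :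
    a (y i) * ∏ j, f j (y j) = ∏ j, update f i (fun t => a t * f i t) j (y j) := by
  rw [← mul_prod_erase univ _ (mem_univ i), ← mul_prod_erase univ _ (mem_univ i), update_self,
    mul_assoc]
  congr 2
  exact prod_congr rfl fun j hj => by rw [update_of_ne (ne_of_mem_erase hj)]

variable [MeasurableSpace α] {μ : Measure α} [SigmaFinite μ]

lemma integrable_mul_prod {f : ι → α → ℝ} {a : α → ℝ} {i : ι} (hf : ∀ j, Integrable (f j) μ)
    (ha : Integrable (fun t => a t * f i t) μ) :
    Integrable (fun y => a (y i) * ∏ j, f j (y j)) (Measure.pi fun _ => μ) := by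
  simp_rw [mul_prod_eq_prod_update]
  refine Integrable.fintype_prod fun j => ?_
  rcases eq_or_ne j i with rfl | hj
  · simpa using ha
  · simpa [update_of_ne hj] using hf j

lemma integral_mul_prod_of_integral_eq_one {f : ι → α → ℝ} (a : α → ℝ) (i : ι)
    (hf : ∀ j ≠ i, ∫ t, f j t ∂μ = 1) :
    ∫ y, a (y i) * ∏ j, f j (y j) ∂(Measure.pi fun _ => μ) = ∫ t, a t * f i t ∂μ := by
  simp_rw [mul_prod_eq_prod_update, integral_fintype_prod_eq_prod]
  rw [prod_eq_single i (fun j _ hj => by rw [update_of_ne hj, hf j hj]) (by simp), update_self]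

end ProductIntegral

lemma integrable_sq_sub_mul_gaussianPDFReal (m : ℝ) {v : ℝ≥0} (hv : v ≠ 0) :
    Integrable (fun t => (t - m) ^ 2 * gaussianPDFReal m v t) := by
  have h : Integrable (fun t => (t - m) ^ 2) (gaussianReal m v) :=
    ((memLp_id_gaussianReal 2).sub (memLp_const m)).integrable_sq
  rw [gaussianReal_of_var_ne_zero _ hv, integrable_withDensity_iff_integrable_smul'
    (measurable_gaussianPDF m v) (ae_of_all _ fun _ => gaussianPDF_lt_top)] at h
  simpa [toReal_gaussianPDF, mul_comm] using h

lemma integral_sq_sub_mul_gaussianPDFReal (m : ℝ) {v : ℝ≥0} (hv : v ≠ 0) :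
    ∫ t, (t - m) ^ 2 * gaussianPDFReal m v t = v := by
  rw [← variance_id_gaussianReal (μ := m), variance_eq_integral measurable_id.aemeasurable,
    integral_gaussianReal_eq_integral_smul hv]
  simp [integral_id_gaussianReal, mul_comm]

section GaussianProposal

variable {d : ℕ} {σ : ℝ}

lemma gaussianProposal_toLp (σ : ℝ) (c : EuclideanSpace ℝ (Fin d)) (y : Fin d → ℝ) :
    gaussianProposal d σ (toLp 2 y) c = ∏ i, gaussianPDFReal (c i) (σ ^ 2).toNNReal (y i) := by
  have hv : ((σ ^ 2).toNNReal : ℝ) = σ ^ 2 := Real.coe_toNNReal _ (sq_nonneg σ)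
  have hnn : 0 ≤ 2 * Real.pi * σ ^ 2 := by positivity
  simp only [gaussianProposal, gaussianPDFReal, hv, prod_mul_distrib, prod_const, card_univ,
    Fintype.card_fin, ← Real.exp_sum, EuclideanSpace.norm_sq_eq]
  congr 1
  · rw [Real.sqrt_eq_rpow, ← Real.rpow_neg_one, ← Real.rpow_mul hnn,
      ← Real.rpow_mul_natCast hnn]
    ring_nf
  · congr 1
    rw [neg_div, sum_div, ← sum_neg_distrib]
    simp [neg_div]

lemma integral_euclideanSpace_eq_pi (F : EuclideanSpace ℝ (Fin d) → ℝ) :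
    ∫ θ, F θ = ∫ y : Fin d → ℝ, F (toLp 2 y) :=
  ((PiLp.volume_preserving_toLp (Fin d)).integral_comp
    (MeasurableEquiv.toLp 2 (Fin d → ℝ)).measurableEmbedding F).symm

lemma integrable_euclideanSpace_iff_pi (F : EuclideanSpace ℝ (Fin d) → ℝ) :
    Integrable F ↔ Integrable (fun y : Fin d → ℝ => F (toLp 2 y)) :=
  ((PiLp.volume_preserving_toLp (Fin d)).integrable_comp_emb
    (MeasurableEquiv.toLp 2 (Fin d → ℝ)).measurableEmbedding).symm

lemma toNNReal_sq_ne_zero (hσ : σ ≠ 0) : (σ ^ 2).toNNReal ≠ 0 := by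
  rw [Ne, Real.toNNReal_eq_zero, not_le]
  positivity

lemma integrable_gaussianProposal (σ : ℝ) (c : EuclideanSpace ℝ (Fin d)) :
    Integrable (fun θ => gaussianProposal d σ θ c) := by
  simp_rw [integrable_euclideanSpace_iff_pi, gaussianProposal_toLp, volume_pi]
  exact Integrable.fintype_prod fun i => integrable_gaussianPDFReal _ _

lemma integral_gaussianProposal (hσ : σ ≠ 0) (c : EuclideanSpace ℝ (Fin d)) :
    ∫ θ, gaussianProposal d σ θ c = 1 := by
  simp_rw [integral_euclideanSpace_eq_pi, gaussianProposal_toLp, volume_pi,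
    integral_fintype_prod_eq_prod, integral_gaussianPDFReal_eq_one _ (toNNReal_sq_ne_zero hσ),
    prod_const_one]

lemma sq_norm_toLp_sub (c : EuclideanSpace ℝ (Fin d)) (y : Fin d → ℝ) :
    ‖toLp 2 y - c‖ ^ 2 = ∑ i, (y i - c i) ^ 2 := by
  simp [EuclideanSpace.norm_sq_eq]

lemma integrable_sq_norm_sub_mul_gaussianProposal (hσ : σ ≠ 0) (c : EuclideanSpace ℝ (Fin d)) :
    Integrable (fun θ => ‖θ - c‖ ^ 2 * gaussianProposal d σ θ c) := by
  simp_rw [integrable_euclideanSpace_iff_pi, gaussianProposal_toLp, sq_norm_toLp_sub, sum_mul,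
    volume_pi]
  exact integrable_finsetSum _ fun i _ =>
    integrable_mul_prod (a := fun t => (t - c i) ^ 2) (fun j => integrable_gaussianPDFReal _ _)
      (integrable_sq_sub_mul_gaussianPDFReal _ (toNNReal_sq_ne_zero hσ))

lemma integral_sq_norm_sub_mul_gaussianProposal (hσ : σ ≠ 0) (c : EuclideanSpace ℝ (Fin d)) :
    ∫ θ, ‖θ - c‖ ^ 2 * gaussianProposal d σ θ c = d * σ ^ 2 := by
  have hv := toNNReal_sq_ne_zero hσ
  simp_rw [integral_euclideanSpace_eq_pi, gaussianProposal_toLp, sq_norm_toLp_sub, sum_mul,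
    volume_pi]
  rw [integral_finsetSum _ fun i _ => integrable_mul_prod (a := fun t => (t - c i) ^ 2)
      (fun j => integrable_gaussianPDFReal _ _) (integrable_sq_sub_mul_gaussianPDFReal _ hv),
    sum_congr rfl fun i _ => (integral_mul_prod_of_integral_eq_one (fun t => (t - c i) ^ 2) i
      fun j _ => integral_gaussianPDFReal_eq_one _ hv).trans
        (integral_sq_sub_mul_gaussianPDFReal _ hv)]
  simp [Real.coe_toNNReal _ (sq_nonneg σ)]

lemma gaussianProposal_nonneg (σ : ℝ) (θ c : EuclideanSpace ℝ (Fin d)) :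
    0 ≤ gaussianProposal d σ θ c := by
  unfold gaussianProposal
  positivity

@[fun_prop]
lemma continuous_gaussianProposal (σ : ℝ) (c : EuclideanSpace ℝ (Fin d)) :
    Continuous (fun θ => gaussianProposal d σ θ c) := by
  unfold gaussianProposal
  fun_prop

lemma norm_sub_mul_gaussianProposal_le {t : ℝ} (ht : 0 < t) (θ c : EuclideanSpace ℝ (Fin d)) :
    ‖θ - c‖ * gaussianProposal d σ θ c ≤
      (2 * t)⁻¹ * (‖θ - c‖ ^ 2 * gaussianProposal d σ θ c) + t / 2 * gaussianProposal d σ θ c := by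
  have hamgm : ‖θ - c‖ ≤ (2 * t)⁻¹ * ‖θ - c‖ ^ 2 + t / 2 := by
    rw [← sub_nonneg]
    have : (2 * t)⁻¹ * ‖θ - c‖ ^ 2 + t / 2 - ‖θ - c‖ = (‖θ - c‖ - t) ^ 2 / (2 * t) := by
      field_simp
      ring
    rw [this]
    positivity
  nlinarith [mul_le_mul_of_nonneg_right hamgm (gaussianProposal_nonneg σ θ c)]

lemma integrable_norm_sub_mul_gaussianProposal (hσ : σ ≠ 0) (c : EuclideanSpace ℝ (Fin d)) :
    Integrable (fun θ => ‖θ - c‖ * gaussianProposal d σ θ c) := by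
  refine Integrable.mono'
    (((integrable_sq_norm_sub_mul_gaussianProposal hσ c).const_mul (2 * 1)⁻¹).add
      ((integrable_gaussianProposal σ c).const_mul (1 / 2)))
    (by fun_prop : Continuous fun θ => ‖θ - c‖ * gaussianProposal d σ θ c).aestronglyMeasurable
    (ae_of_all _ fun θ => ?_)
  rw [Real.norm_of_nonneg (mul_nonneg (norm_nonneg _) (gaussianProposal_nonneg σ θ c))]
  exact norm_sub_mul_gaussianProposal_le one_pos θ c

lemma integral_norm_sub_mul_gaussianProposal_le (hσ : 0 < σ) (c : EuclideanSpace ℝ (Fin d)) :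
    ∫ θ, ‖θ - c‖ * gaussianProposal d σ θ c ≤ σ * √d := by
  rcases Nat.eq_zero_or_pos d with rfl | hd
  · have h : ∀ θ : EuclideanSpace ℝ (Fin 0), θ - c = 0 := fun θ => Subsingleton.elim _ _
    simp [h]
  have ht : 0 < σ * √d := by positivity
  calc ∫ θ, ‖θ - c‖ * gaussianProposal d σ θ c
      ≤ ∫ θ, ((2 * (σ * √d))⁻¹ * (‖θ - c‖ ^ 2 * gaussianProposal d σ θ c) +
          σ * √d / 2 * gaussianProposal d σ θ c) :=
        integral_mono (integrable_norm_sub_mul_gaussianProposal hσ.ne' c)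
          (((integrable_sq_norm_sub_mul_gaussianProposal hσ.ne' c).const_mul _).add
            ((integrable_gaussianProposal σ c).const_mul _))
          (norm_sub_mul_gaussianProposal_le ht · c)
    _ = (2 * (σ * √d))⁻¹ * (d * σ ^ 2) + σ * √d / 2 := by
        rw [integral_add ((integrable_sq_norm_sub_mul_gaussianProposal hσ.ne' c).const_mul _)
          ((integrable_gaussianProposal σ c).const_mul _), integral_const_mul, integral_const_mul,
          integral_sq_norm_sub_mul_gaussianProposal hσ.ne', integral_gaussianProposal hσ.ne',
          mul_one]
    _ = σ * √d := by
        have hd' : √(d : ℝ) ^ 2 = d := Real.sq_sqrt d.cast_nonneg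
        field_simp
        rw [hd']
        ring

end GaussianProposal

theorem ConcaveOn.apply_sub_le_of_hasFDerivAt {E : Type*} [NormedAddCommGroup E]
    [NormedSpace ℝ E] {f : E → ℝ} {f' : E → E →L[ℝ] ℝ} (hf : ConcaveOn ℝ Set.univ f)
    (hf' : ∀ x, HasFDerivAt f (f' x) x) (a b : E) :
    f' b (b - a) ≤ f' a (b - a) := by
  set γ : ℝ →ᵃ[ℝ] E := AffineMap.lineMap a b
  have hline : ConcaveOn ℝ Set.univ (f ∘ γ) := by
    simpa using hf.comp_affineMap γ
  have hderiv (t : ℝ) : HasDerivAt (f ∘ γ) (f' (γ t) (b - a)) t :=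
    (hf' _).comp_hasDerivAt t AffineMap.hasDerivAt_lineMap
  have h := (hline.le_slope_of_hasDerivAt (Set.mem_univ 0) (Set.mem_univ 1) one_pos
    (hderiv 1)).trans (hline.slope_le_of_hasDerivAt (Set.mem_univ 0) (Set.mem_univ 1) one_pos
    (hderiv 0))
  rwa [show γ 1 = b from AffineMap.lineMap_apply_one a b,
    show γ 0 = a from AffineMap.lineMap_apply_zero a b] at h

open scoped RealInnerProductSpace in
theorem mul_norm_sub_le_norm_gradient_sub {E : Type*} [NormedAddCommGroup E]
    [InnerProductSpace ℝ E] [CompleteSpace E] {ℓ : E → ℝ} {g : E → E} {μ : ℝ}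
    (hg : ∀ θ, HasGradientAt ℓ (g θ) θ)
    (hconc : ConcaveOn ℝ Set.univ fun θ => ℓ θ + (μ / 2) * ‖θ‖ ^ 2) (a b : E) :
    μ * ‖b - a‖ ≤ ‖g b - g a‖ := by
  have hmono := hconc.apply_sub_le_of_hasFDerivAt
    (fun θ => (hg θ).hasFDerivAt.add ((hasStrictFDerivAt_norm_sq θ).hasFDerivAt.const_mul _)) a b
  have hstrong : μ * ‖b - a‖ ^ 2 ≤ ⟪g a - g b, b - a⟫ := by
    simp only [add_apply, smul_apply, InnerProductSpace.toDual_apply_apply, coe_innerSL_apply,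
      nsmul_eq_mul, Nat.cast_ofNat, smul_eq_mul] at hmono
    rw [← real_inner_self_eq_norm_sq, inner_sub_left, inner_sub_left]
    linarith
  rcases (norm_nonneg (b - a)).eq_or_lt with h0 | hpos
  · rw [← h0, mul_zero]
    exact norm_nonneg _
  · refine le_of_mul_le_mul_right ?_ hpos
    calc μ * ‖b - a‖ * ‖b - a‖ = μ * ‖b - a‖ ^ 2 := by ring
      _ ≤ ⟪g a - g b, b - a⟫ := hstrong
      _ ≤ ‖g b - g a‖ * ‖b - a‖ := by
        rw [← norm_neg (g b - g a), neg_sub]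
        exact real_inner_le_norm _ _

theorem LipschitzWith.norm_le_of_integral_smul_eq_zero {X F : Type*} [PseudoMetricSpace X]
    [MeasurableSpace X] {ν : Measure X} [NormedAddCommGroup F] [NormedSpace ℝ F] [CompleteSpace F]
    {g : X → F} {K : ℝ≥0} (hg : LipschitzWith K g) {π q : X → ℝ} {M : ℝ} (c : X)
    (hπ_nonneg : ∀ x, 0 ≤ π x) (hπ_int : Integrable π ν) (hπ_one : ∫ x, π x ∂ν = 1)
    (hπg_int : Integrable (fun x => π x • g x) ν) (hπg : ∫ x, π x • g x ∂ν = 0)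
    (hπq : ∀ x, π x ≤ M * q x) (hq_int : Integrable (fun x => dist x c * q x) ν) :
    ‖g c‖ ≤ K * M * ∫ x, dist x c * q x ∂ν := by
  have hrepr : g c = ∫ x, π x • (g c - g x) ∂ν := by
    simp_rw [smul_sub]
    rw [integral_sub (hπ_int.smul_const _) hπg_int, integral_smul_const, hπ_one, hπg, one_smul,
      sub_zero]
  have hpointwise (x : X) : ‖π x • (g c - g x)‖ ≤ K * M * (dist x c * q x) := by
    rw [norm_smul, Real.norm_of_nonneg (hπ_nonneg x), ← dist_eq_norm, dist_comm]
    calc π x * dist (g x) (g c) ≤ M * q x * (K * dist x c) :=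
          mul_le_mul (hπq x) (hg.dist_le_mul x c) dist_nonneg ((hπ_nonneg x).trans (hπq x))
      _ = K * M * (dist x c * q x) := by ring
  calc ‖g c‖ = ‖∫ x, π x • (g c - g x) ∂ν‖ := congrArg _ hrepr
    _ ≤ ∫ x, ‖π x • (g c - g x)‖ ∂ν := norm_integral_le_integral_norm _
    _ ≤ ∫ x, K * M * (dist x c * q x) ∂ν :=
      integral_mono_of_nonneg (ae_of_all _ fun _ => norm_nonneg _) (hq_int.const_mul _)
        (ae_of_all _ hpointwise)
    _ = K * M * ∫ x, dist x c * q x ∂ν := integral_const_mul _ _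

theorem smoothed_mle_close_to_mle_general
    (d k : ℕ)
    (x : EuclideanSpace ℝ (Fin k))
    (σ L μ : ℝ) (hσ : 0 < σ) (hL : 0 ≤ L) (hμ : 0 < μ)
    -- `p θ x'` is the likelihood family `p(x'|θ)`
    (p : EuclideanSpace ℝ (Fin d) → EuclideanSpace ℝ (Fin k) → ℝ)
    (hp_pos : ∀ θ x', 0 < p θ x')
    -- `ℓ = log p(x|·)` is differentiable with gradient `g`, μ-strongly concave,
    -- and `g` is `L`-Lipschitz
    (g : EuclideanSpace ℝ (Fin d) → EuclideanSpace ℝ (Fin d))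
    (hg : ∀ θ, HasGradientAt (fun θ' => Real.log (p θ' x)) (g θ) θ)
    (hconc : ConcaveOn ℝ Set.univ
      (fun θ => Real.log (p θ x) + (μ / 2) * ‖θ‖ ^ 2))
    (hgLip : LipschitzWith (Real.toNNReal L) g)
    -- the smoothed normalizing constant `Z_σ(θt) ∈ (0, ∞)` for every `θt`
    (Z : EuclideanSpace ℝ (Fin d) → ℝ)
    (hZ : ∀ θt, Z θt = ∫ θ, p θ x * gaussianProposal d σ θ θt)
    (hZ_int : ∀ θt, Integrable (fun θ => p θ x * gaussianProposal d σ θ θt))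
    (hZ_pos : ∀ θt, 0 < Z θt)
    -- `θ̂` is the MLE : a zero of the score
    (θhat : EuclideanSpace ℝ (Fin d)) (hθhat : g θhat = 0)
    -- `θ̂_σ` is the smoothed MLE : a zero of the Bayes-optimal FSM score
    (θhatσ : EuclideanSpace ℝ (Fin d))
    (hθhatσ : (∫ θ, (p θ x * gaussianProposal d σ θ θhatσ / Z θhatσ) • g θ) = 0)
    (hg_int : Integrable
      (fun θ => (p θ x * gaussianProposal d σ θ θhatσ / Z θhatσ) • g θ))
    -- `M = sup_θ p(x|θ)/Z_σ(θ̂_σ) < ∞`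
    (M : ℝ) (hM : M = ⨆ θ : EuclideanSpace ℝ (Fin d), p θ x / Z θhatσ)
    (hMbdd : BddAbove (Set.range fun θ : EuclideanSpace ℝ (Fin d) => p θ x / Z θhatσ)) :
    ‖θhatσ - θhat‖ ≤ (L * Real.sqrt d * σ / μ) * M := by
  have hp_le_M (θ) : p θ x / Z θhatσ ≤ M := hM ▸ le_ciSup hMbdd θ
  have hM_nonneg : 0 ≤ M := (div_pos (hp_pos θhat x) (hZ_pos θhatσ)).le.trans (hp_le_M θhat)
  have hbias : ‖g θhatσ‖ ≤ L * M * (σ * √d) := by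
    have h := hgLip.norm_le_of_integral_smul_eq_zero θhatσ
      (fun θ => div_nonneg (mul_nonneg (hp_pos θ x).le (gaussianProposal_nonneg σ θ θhatσ))
        (hZ_pos θhatσ).le)
      ((hZ_int θhatσ).div_const _)
      (by rw [integral_div, ← hZ, div_self (hZ_pos θhatσ).ne']) hg_int hθhatσ
      (fun θ => by
        rw [mul_div_right_comm]
        exact mul_le_mul_of_nonneg_right (hp_le_M θ) (gaussianProposal_nonneg σ θ θhatσ))
      (by simpa only [dist_eq_norm] using integrable_norm_sub_mul_gaussianProposal hσ.ne' θhatσ)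
    simp only [dist_eq_norm, Real.coe_toNNReal L hL] at h
    exact h.trans (mul_le_mul_of_nonneg_left (integral_norm_sub_mul_gaussianProposal_le hσ θhatσ)
      (mul_nonneg hL hM_nonneg))
  have hmono := mul_norm_sub_le_norm_gradient_sub hg hconc θhat θhatσ
  rw [hθhat, sub_zero] at hmono
  rw [div_mul_eq_mul_div, le_div_iff₀ hμ]
  linarith

/-- **The smoothed MLE is within `O(σ)` of the true MLE** (Appendix A.7.1 of the paper):
if the log-likelihood is `μ`-strongly concave with `L`-Lipschitz gradient `g`, `θ̂` is a
zero of `g` (the MLE) and `θ̂_σ` is a zero of the Bayes-optimal FSM score (the smoothed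
MLE), then `‖θ̂_σ − θ̂‖ ≤ (L √d σ / μ) M` with `M = sup_θ p(x|θ)/Z_σ(θ̂_σ)`. -/
theorem smoothed_mle_close_to_mle
    (d k : ℕ) (hd : 0 < d) (hk : 0 < k)
    (x : EuclideanSpace ℝ (Fin k))
    (σ L μ : ℝ) (hσ : 0 < σ) (hL : 0 ≤ L) (hμ : 0 < μ)
    -- `p θ x'` is the likelihood family `p(x'|θ)`
    (p : EuclideanSpace ℝ (Fin d) → EuclideanSpace ℝ (Fin k) → ℝ)
    (hp_meas : Measurable (Function.uncurry p))
    (hp_pos : ∀ θ x', 0 < p θ x')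
    (hp_prob : ∀ θ, ∫ x', p θ x' = 1)
    -- `ℓ = log p(x|·)` is differentiable with gradient `g`, μ-strongly concave,
    -- and `g` is `L`-Lipschitz
    (g : EuclideanSpace ℝ (Fin d) → EuclideanSpace ℝ (Fin d))
    (hg : ∀ θ, HasGradientAt (fun θ' => Real.log (p θ' x)) (g θ) θ)
    (hconc : ConcaveOn ℝ Set.univ
      (fun θ => Real.log (p θ x) + (μ / 2) * ‖θ‖ ^ 2))
    (hgLip : LipschitzWith (Real.toNNReal L) g)
    -- the smoothed normalizing constant `Z_σ(θt) ∈ (0, ∞)` for every `θt`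
    (Z : EuclideanSpace ℝ (Fin d) → ℝ)
    (hZ : ∀ θt, Z θt = ∫ θ, p θ x * gaussianProposal d σ θ θt)
    (hZ_int : ∀ θt, Integrable (fun θ => p θ x * gaussianProposal d σ θ θt))
    (hZ_pos : ∀ θt, 0 < Z θt)
    -- `θ̂` is the MLE : a zero of the score
    (θhat : EuclideanSpace ℝ (Fin d)) (hθhat : g θhat = 0)
    -- `θ̂_σ` is the smoothed MLE : a zero of the Bayes-optimal FSM score
    (θhatσ : EuclideanSpace ℝ (Fin d))
    (hθhatσ : (∫ θ, (p θ x * gaussianProposal d σ θ θhatσ / Z θhatσ) • g θ) = 0)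
    (hg_int : Integrable
      (fun θ => (p θ x * gaussianProposal d σ θ θhatσ / Z θhatσ) • g θ))
    -- `M = sup_θ p(x|θ)/Z_σ(θ̂_σ) < ∞`
    (M : ℝ) (hM : M = ⨆ θ : EuclideanSpace ℝ (Fin d), p θ x / Z θhatσ)
    (hMbdd : BddAbove (Set.range fun θ : EuclideanSpace ℝ (Fin d) => p θ x / Z θhatσ)) :
    ‖θhatσ - θhat‖ ≤ (L * Real.sqrt d * σ / μ) * M :=
  smoothed_mle_close_to_mle_general d k x σ L μ hσ hL hμ p hp_pos g hg hconc hgLip Z hZ hZ_int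
    hZ_pos θhat hθhat θhatσ hθhatσ hg_int M hM hMbdd
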